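/- In the algorithmic setting described in the context, ∑_{k=0}^∞ ‖X^{k+1} − X^k‖_F² < +∞; consequently ‖X^{k+1} − X^k‖_F → 0 as k → ∞, and moreover ‖Y^k − X^k‖_F → 0 and ‖Y^k − X^{k+1}‖_F → 0 as k → ∞. -/

import Mathlib

/-!
A Lyapunov argument. Flattening matrices into Euclidean vectors, the `L_f`-Lipschitz gradient
gives the two-sided descent bound `|f A − f B − ⟨∇f(B), A − B⟩| ≤ L_f/2 ‖A − B‖_F²`. Comparing
the surrogate at its minimizer `X^{k+1}` with its value at `X^k`, and majorizing the smoothed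
penalty by its tangent at `σᵢ(X^k) + εᵢ^k` (concavity of `t ↦ t^p`, together with
`ε^{k+1} ≤ ε^k`), gives for `Φ_k = f(X^k) + λ ∑ᵢ (σᵢ(X^k) + εᵢ^k)^p`
  `Φ_{k+1} + β/2 ‖X^{k+1} − X^k‖_F² ≤ Φ_k + (L_f + β)/2 ‖X^k − Y^k‖_F²`.
As `‖X^k − Y^k‖_F ≤ ᾱ ‖X^k − X^{k−1}‖_F`, the function `Φ_k + δ ‖X^k − X^{k−1}‖_F²` with
`δ = (L_f + β) ᾱ²/2 < β/2` drops by `(β/2 − δ) ‖X^{k+1} − X^k‖_F²` at every step. It bounds the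
objective from above, so level-boundedness confines the iterates to a ball, on which `f` is
bounded below; hence the drops are summable.
-/

open Filter Topology Matrix

/-- The singular values of a real `m × n` matrix (`m ≤ n`), in nonincreasing order:
`sval X i` is the `(i+1)`-th largest singular value of `X`. -/
noncomputable def sval {m n : ℕ} (X : Matrix (Fin m) (Fin n) ℝ) : Fin m → ℝ :=
  fun i =>
    let ev : Fin m → ℝ := (Matrix.isHermitian_mul_conjTranspose_self X).eigenvalues
    Real.sqrt (ev (Tuple.sort ev i.rev))

/-- The `m × n` matrix with the vector `d` on its main diagonal and zeros elsewhere. -/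
def rdiag {m n : ℕ} (d : Fin m → ℝ) : Matrix (Fin m) (Fin n) ℝ :=
  Matrix.of fun i j => if (j : ℕ) = (i : ℕ) then d i else 0

/-- The Frobenius norm of a matrix. -/
noncomputable def frobNorm {m n : ℕ} (X : Matrix (Fin m) (Fin n) ℝ) : ℝ :=
  Real.sqrt (∑ i, ∑ j, (X i j) ^ 2)

/-- The Frobenius (trace) inner product of two matrices. -/
def finner {m n : ℕ} (A B : Matrix (Fin m) (Fin n) ℝ) : ℝ :=
  ∑ i, ∑ j, A i j * B i j

/-- `G` is the (Fréchet) gradient of `f : ℝ^{m×n} → ℝ` at `X`, with respect to the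
Frobenius inner product. -/
def HasFrobGradientAt {m n : ℕ} (f : Matrix (Fin m) (Fin n) ℝ → ℝ)
    (G X : Matrix (Fin m) (Fin n) ℝ) : Prop :=
  Filter.Tendsto
    (fun H : Matrix (Fin m) (Fin n) ℝ => |f (X + H) - f X - finner G H| / frobNorm H)
    (nhdsWithin 0 {0}ᶜ) (nhds 0)

open scoped InnerProductSpace

theorem Real.rpow_le_rpow_add_mul_rpow_sub_one_mul_sub {p s t : ℝ} (hp0 : 0 ≤ p) (hp1 : p ≤ 1)
    (hs : 0 ≤ s) (ht : 0 < t) : s ^ p ≤ t ^ p + p * t ^ (p - 1) * (s - t) := by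
  have hbern := rpow_one_add_le_one_add_mul_self (s := (s - t) / t)
    (by rw [le_div_iff₀ ht]; linarith) hp0 hp1
  have hst : 1 + (s - t) / t = s / t := by field_simp; ring
  rw [hst, Real.div_rpow hs ht.le, div_le_iff₀ (by positivity)] at hbern
  rw [Real.rpow_sub_one ht.ne']
  calc s ^ p ≤ (1 + p * ((s - t) / t)) * t ^ p := hbern
    _ = t ^ p + p * (t ^ p / t) * (s - t) := by field_simp

theorem sum_rpow_add_le_reweighted {ι : Type*} [Fintype ι] {p : ℝ} (hp0 : 0 ≤ p) (hp1 : p ≤ 1)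
    {a a' e e' : ι → ℝ} (ht : ∀ i, 0 < a i + e i) (hs : ∀ i, 0 ≤ a' i + e' i)
    (he : ∀ i, e' i ≤ e i) :
    ∑ i, (a' i + e' i) ^ p ≤ ∑ i, (a i + e i) ^ p
      + (∑ i, p * (a i + e i) ^ (p - 1) * a' i - ∑ i, p * (a i + e i) ^ (p - 1) * a i) := by
  rw [← Finset.sum_sub_distrib, ← Finset.sum_add_distrib]
  refine Finset.sum_le_sum fun i _ => ?_
  have hw : 0 ≤ p * (a i + e i) ^ (p - 1) := mul_nonneg hp0 (Real.rpow_nonneg (ht i).le _)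
  have := Real.rpow_le_rpow_add_mul_rpow_sub_one_mul_sub hp0 hp1 (hs i) (ht i)
  linarith [mul_le_mul_of_nonneg_left (he i) hw]

theorem summable_of_add_mul_le {E d : ℕ → ℝ} {c : ℝ} (hc : 0 < c) (hd : ∀ k, 0 ≤ d k)
    (hE : ∀ k, E (k + 1) + c * d k ≤ E k) (hbdd : BddBelow (Set.range E)) : Summable d := by
  obtain ⟨B, hB⟩ := hbdd
  have htel : ∀ N, c * ∑ k ∈ Finset.range N, d k ≤ E 0 - E N := by
    intro N
    induction N with
    | zero => simp
    | succ N ih => rw [Finset.sum_range_succ, mul_add]; linarith [hE N]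
  refine summable_of_sum_range_le (c := (E 0 - B) / c) hd fun N => ?_
  rw [le_div_iff₀' hc]
  linarith [htel N, hB ⟨N, rfl⟩]

section Descent

variable {E : Type*} [NormedAddCommGroup E] [InnerProductSpace ℝ E] [CompleteSpace E]

theorem abs_sub_sub_inner_le_of_lipschitz_gradient {g : E → ℝ} {G : E → E} {L : ℝ}
    (hg : ∀ x, HasGradientAt g (G x) x) (hG : ∀ x y, ‖G x - G y‖ ≤ L * ‖x - y‖) (x y : E) :
    |g y - g x - ⟪G x, y - x⟫_ℝ| ≤ L / 2 * ‖y - x‖ ^ 2 := by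
  set d := y - x
  let φ : ℝ → ℝ := fun t => g (x + t • d) - g x - t * ⟪G x, d⟫_ℝ
  have hφ : ∀ t, HasDerivAt φ ⟪G (x + t • d) - G x, d⟫_ℝ t := by
    intro t
    have hline : HasDerivAt (fun s : ℝ => x + s • d) d t := by
      simpa using ((hasDerivAt_id t).smul_const d).const_add x
    have hcomp : HasDerivAt (fun s : ℝ => g (x + s • d)) ⟪G (x + t • d), d⟫_ℝ t := by
      have := (hg (x + t • d)).hasFDerivAt.comp_hasDerivAt t hline
      rwa [InnerProductSpace.toDual_apply_apply] at this
    exact ((hcomp.sub_const (g x)).sub ((hasDerivAt_id t).mul_const _)).congr_deriv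
      (by simp [inner_sub_left])
  have hbound : ∀ t ∈ Set.Ico (0 : ℝ) 1, ‖⟪G (x + t • d) - G x, d⟫_ℝ‖ ≤ L * ‖d‖ ^ 2 * t := by
    intro t ht
    calc ‖⟪G (x + t • d) - G x, d⟫_ℝ‖ ≤ ‖G (x + t • d) - G x‖ * ‖d‖ := norm_inner_le_norm _ _
      _ ≤ L * ‖(x + t • d) - x‖ * ‖d‖ := by gcongr; exact hG _ _
      _ = L * ‖d‖ ^ 2 * t := by
        rw [add_sub_cancel_left, norm_smul, Real.norm_of_nonneg ht.1]
        ring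
  have hB : ∀ t, HasDerivAt (fun t : ℝ => L / 2 * ‖d‖ ^ 2 * t ^ 2) (L * ‖d‖ ^ 2 * t) t := by
    intro t
    exact ((hasDerivAt_pow 2 t).const_mul (L / 2 * ‖d‖ ^ 2)).congr_deriv (by push_cast; ring)
  have := image_norm_le_of_norm_deriv_right_le_deriv_boundary (a := 0) (b := 1)
    (fun t _ => (hφ t).continuousAt.continuousWithinAt) (fun t _ => (hφ t).hasDerivWithinAt)
    (by simp [φ]) hB hbound (Set.right_mem_Icc.mpr zero_le_one)
  simpa [φ, d] using this

end Descent

section Frobenius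

variable {m n : ℕ}

noncomputable def frobEquiv :
    Matrix (Fin m) (Fin n) ℝ ≃ₗ[ℝ] EuclideanSpace ℝ (Fin m × Fin n) where
  toFun A := WithLp.toLp 2 fun q => A q.1 q.2
  invFun v := Matrix.of fun i j => v (i, j)
  map_add' _ _ := rfl
  map_smul' _ _ := rfl
  left_inv _ := rfl
  right_inv _ := rfl

@[simp]
theorem frobEquiv_apply (A : Matrix (Fin m) (Fin n) ℝ) (q : Fin m × Fin n) :
    frobEquiv A q = A q.1 q.2 := rfl

theorem frobNorm_eq_norm (A : Matrix (Fin m) (Fin n) ℝ) : frobNorm A = ‖frobEquiv A‖ := by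
  simp [frobNorm, EuclideanSpace.norm_eq, Fintype.sum_prod_type]

theorem finner_eq_inner (A B : Matrix (Fin m) (Fin n) ℝ) :
    finner A B = ⟪frobEquiv A, frobEquiv B⟫_ℝ := by
  simp [finner, PiLp.inner_apply, Fintype.sum_prod_type, mul_comm]

theorem frobNorm_nonneg (A : Matrix (Fin m) (Fin n) ℝ) : 0 ≤ frobNorm A := Real.sqrt_nonneg _

theorem frobNorm_smul (c : ℝ) (A : Matrix (Fin m) (Fin n) ℝ) :
    frobNorm (c • A) = |c| * frobNorm A := by
  rw [frobNorm_eq_norm, frobNorm_eq_norm, map_smul, norm_smul, Real.norm_eq_abs]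

theorem frobNorm_sub_comm (A B : Matrix (Fin m) (Fin n) ℝ) :
    frobNorm (A - B) = frobNorm (B - A) := by
  rw [frobNorm_eq_norm, frobNorm_eq_norm, map_sub, map_sub, norm_sub_rev]

theorem sval_nonneg (X : Matrix (Fin m) (Fin n) ℝ) (i : Fin m) : 0 ≤ sval X i := Real.sqrt_nonneg _

theorem HasFrobGradientAt.hasGradientAt {f : Matrix (Fin m) (Fin n) ℝ → ℝ}
    {G X : Matrix (Fin m) (Fin n) ℝ} (h : HasFrobGradientAt f G X) :
    HasGradientAt (f ∘ frobEquiv.symm) (frobEquiv G) (frobEquiv X) := by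
  have hsymm : Tendsto frobEquiv.symm (𝓝[≠] (0 : EuclideanSpace ℝ (Fin m × Fin n)))
      (𝓝[≠] 0) := by
    refine tendsto_nhdsWithin_iff.2
      ⟨?_, eventually_nhdsWithin_of_forall fun v hv => by simpa using hv⟩
    exact ((LinearMap.continuous_of_finiteDimensional frobEquiv.symm.toLinearMap).tendsto' 0 0
      (map_zero _)).mono_left nhdsWithin_le_nhds
  rw [hasGradientAt_iff_hasFDerivAt, hasFDerivAt_iff_isLittleO_nhds_zero,
    ← Asymptotics.isLittleO_norm_right, ← nhdsNE_sup_pure, Asymptotics.isLittleO_sup,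
    Asymptotics.isLittleO_pure]
  refine ⟨?_, by simp⟩
  rw [Asymptotics.isLittleO_iff_tendsto' (eventually_nhdsWithin_of_forall fun v hv h0 => by
    simp_all), tendsto_zero_iff_abs_tendsto_zero]
  refine (h.comp hsymm).congr fun v => ?_
  simp [frobNorm_eq_norm, finner_eq_inner, abs_div]

theorem abs_sub_sub_finner_le_of_lipschitz_gradient {f : Matrix (Fin m) (Fin n) ℝ → ℝ}
    {Gf : Matrix (Fin m) (Fin n) ℝ → Matrix (Fin m) (Fin n) ℝ} {Lf : ℝ}
    (hgrad : ∀ Z, HasFrobGradientAt f (Gf Z) Z)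
    (hlip : ∀ Z W, frobNorm (Gf Z - Gf W) ≤ Lf * frobNorm (Z - W))
    (A B : Matrix (Fin m) (Fin n) ℝ) :
    |f A - f B - finner (Gf B) (A - B)| ≤ Lf / 2 * frobNorm (A - B) ^ 2 := by
  have := abs_sub_sub_inner_le_of_lipschitz_gradient (g := f ∘ frobEquiv.symm)
    (G := fun v => frobEquiv (Gf (frobEquiv.symm v)))
    (fun v => by simpa using (hgrad (frobEquiv.symm v)).hasGradientAt)
    (fun v w => by simpa [frobNorm_eq_norm] using hlip (frobEquiv.symm v) (frobEquiv.symm w))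
    (frobEquiv B) (frobEquiv A)
  simpa [finner_eq_inner, frobNorm_eq_norm] using this

theorem bddBelow_image_frobNorm_le {f : Matrix (Fin m) (Fin n) ℝ → ℝ}
    {Gf : Matrix (Fin m) (Fin n) ℝ → Matrix (Fin m) (Fin n) ℝ} {Lf : ℝ}
    (hgrad : ∀ Z, HasFrobGradientAt f (Gf Z) Z)
    (hlip : ∀ Z W, frobNorm (Gf Z - Gf W) ≤ Lf * frobNorm (Z - W)) (hLf : 0 ≤ Lf) (R : ℝ) :
    BddBelow (f '' {Z | frobNorm Z ≤ R}) := by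
  refine ⟨f 0 - frobNorm (Gf 0) * R - Lf / 2 * R ^ 2, ?_⟩
  rintro _ ⟨Z, hZ, rfl⟩
  have hdescent := (abs_le.1 (abs_sub_sub_finner_le_of_lipschitz_gradient hgrad hlip Z 0)).1
  have hcs : -(frobNorm (Gf 0) * frobNorm Z) ≤ finner (Gf 0) Z := by
    rw [finner_eq_inner, frobNorm_eq_norm, frobNorm_eq_norm]
    exact neg_le_of_abs_le (abs_real_inner_le_norm _ _)
  rw [sub_zero] at hdescent
  have hR := mul_le_mul_of_nonneg_left (pow_le_pow_left₀ (frobNorm_nonneg Z) hZ 2)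
    (by positivity : 0 ≤ Lf / 2)
  linarith [mul_le_mul_of_nonneg_left hZ (frobNorm_nonneg (Gf 0))]

end Frobenius

section Algorithm

variable {m n : ℕ}

noncomputable def smoothedObjective (f : Matrix (Fin m) (Fin n) ℝ → ℝ) (lam p : ℝ)
    (ε : Fin m → ℝ) (X : Matrix (Fin m) (Fin n) ℝ) : ℝ :=
  f X + lam * ∑ i, (sval X i + ε i) ^ p

/-- The paper's `L`: `X^{k+1}` minimizes `surrogate f Gf β lam p (X k) (Y k) (ε k)`. -/
noncomputable def surrogate (f : Matrix (Fin m) (Fin n) ℝ → ℝ)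
    (Gf : Matrix (Fin m) (Fin n) ℝ → Matrix (Fin m) (Fin n) ℝ) (β lam p : ℝ)
    (Xk Yk : Matrix (Fin m) (Fin n) ℝ) (εk : Fin m → ℝ) (Z : Matrix (Fin m) (Fin n) ℝ) : ℝ :=
  f Yk + finner Z (Gf Yk) + β / 2 * frobNorm (Z - Yk) ^ 2 + β / 2 * frobNorm (Z - Xk) ^ 2
    + lam * ∑ i, (p * (sval Xk i + εk i) ^ (p - 1)) * sval Z i

theorem smoothedObjective_add_le_of_surrogate_le {f : Matrix (Fin m) (Fin n) ℝ → ℝ}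
    {Gf : Matrix (Fin m) (Fin n) ℝ → Matrix (Fin m) (Fin n) ℝ} {Lf β lam p : ℝ}
    (hgrad : ∀ Z, HasFrobGradientAt f (Gf Z) Z)
    (hlip : ∀ Z W, frobNorm (Gf Z - Gf W) ≤ Lf * frobNorm (Z - W)) (hβ : Lf ≤ β)
    (hp0 : 0 ≤ p) (hp1 : p ≤ 1) (hlam : 0 ≤ lam) {X₀ X₁ Y : Matrix (Fin m) (Fin n) ℝ}
    {ε₀ ε₁ : Fin m → ℝ} (hε₀ : ∀ i, 0 < ε₀ i) (hε₁ : ∀ i, 0 ≤ ε₁ i) (hε : ∀ i, ε₁ i ≤ ε₀ i)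
    (hmin : surrogate f Gf β lam p X₀ Y ε₀ X₁ ≤ surrogate f Gf β lam p X₀ Y ε₀ X₀) :
    smoothedObjective f lam p ε₁ X₁ + β / 2 * frobNorm (X₁ - X₀) ^ 2
      ≤ smoothedObjective f lam p ε₀ X₀ + (Lf + β) / 2 * frobNorm (X₀ - Y) ^ 2 := by
  have hupper := (abs_le.1 (abs_sub_sub_finner_le_of_lipschitz_gradient hgrad hlip X₁ Y)).2
  have hlower := (abs_le.1 (abs_sub_sub_finner_le_of_lipschitz_gradient hgrad hlip X₀ Y)).1
  have hconc := mul_le_mul_of_nonneg_left (sum_rpow_add_le_reweighted hp0 hp1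
    (fun i => add_pos_of_nonneg_of_pos (sval_nonneg X₀ i) (hε₀ i))
    (fun i => add_nonneg (sval_nonneg X₁ i) (hε₁ i)) hε) hlam
  have hdrop : (Lf - β) / 2 * frobNorm (X₁ - Y) ^ 2 ≤ 0 :=
    mul_nonpos_of_nonpos_of_nonneg (by linarith) (sq_nonneg _)
  have hfinner : ∀ A, finner (Gf Y) (A - Y) = finner A (Gf Y) - finner Y (Gf Y) := fun A => by
    simp only [finner_eq_inner, map_sub, inner_sub_right, real_inner_comm]
  rw [hfinner] at hupper hlower
  simp only [surrogate, sub_self, frobNorm_eq_norm (0 : Matrix (Fin m) (Fin n) ℝ), map_zero,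
    norm_zero] at hmin
  simp only [smoothedObjective]
  linarith

theorem frobNorm_extrapolation_le {X Y : ℕ → Matrix (Fin m) (Fin n) ℝ} {α : ℕ → ℝ}
    {alphabar : ℝ} (hα : ∀ k, α k ∈ Set.Icc 0 alphabar)
    (hY : ∀ k, Y k = X k + α k • (X k - X (k - 1))) (k : ℕ) :
    frobNorm (Y k - X k) ≤ alphabar * frobNorm (X k - X (k - 1)) := by
  rw [hY, add_sub_cancel_left, frobNorm_smul, abs_of_nonneg (hα k).1]
  exact mul_le_mul_of_nonneg_right (hα k).2 (frobNorm_nonneg _)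

/-- At `k = 0` the truncated subtraction `k - 1 = 0` reads `X^{−1}` as `X^0`. -/
noncomputable def lyapunov (f : Matrix (Fin m) (Fin n) ℝ → ℝ) (lam p δ : ℝ)
    (ε : ℕ → Fin m → ℝ) (X : ℕ → Matrix (Fin m) (Fin n) ℝ) (k : ℕ) : ℝ :=
  smoothedObjective f lam p (ε k) (X k) + δ * frobNorm (X k - X (k - 1)) ^ 2

theorem objective_le_lyapunov {f : Matrix (Fin m) (Fin n) ℝ → ℝ} {lam p δ : ℝ}
    {ε : ℕ → Fin m → ℝ} {X : ℕ → Matrix (Fin m) (Fin n) ℝ} (hp : 0 ≤ p) (hlam : 0 ≤ lam)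
    (hδ : 0 ≤ δ) (k : ℕ) (hε : ∀ i, 0 ≤ ε k i) :
    f (X k) + lam * ∑ i, sval (X k) i ^ p ≤ lyapunov f lam p δ ε X k := by
  have hsum : ∑ i, sval (X k) i ^ p ≤ ∑ i, (sval (X k) i + ε k i) ^ p :=
    Finset.sum_le_sum fun i _ =>
      Real.rpow_le_rpow (sval_nonneg _ i) (le_add_of_nonneg_right (hε i)) hp
  have := mul_le_mul_of_nonneg_left hsum hlam
  have := mul_nonneg hδ (sq_nonneg (frobNorm (X k - X (k - 1))))
  simp only [lyapunov, smoothedObjective]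
  linarith

theorem bddBelow_range_lyapunov {f : Matrix (Fin m) (Fin n) ℝ → ℝ}
    {Gf : Matrix (Fin m) (Fin n) ℝ → Matrix (Fin m) (Fin n) ℝ} {Lf lam p δ : ℝ}
    (hgrad : ∀ Z, HasFrobGradientAt f (Gf Z) Z)
    (hlip : ∀ Z W, frobNorm (Gf Z - Gf W) ≤ Lf * frobNorm (Z - W)) (hLf : 0 ≤ Lf)
    (hp : 0 ≤ p) (hlam : 0 ≤ lam) (hδ : 0 ≤ δ) {ε : ℕ → Fin m → ℝ} (hε : ∀ k i, 0 ≤ ε k i)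
    {X : ℕ → Matrix (Fin m) (Fin n) ℝ}
    (hlevel : ∀ cc : ℝ, ∃ R : ℝ, ∀ Z : Matrix (Fin m) (Fin n) ℝ,
      f Z + lam * (∑ i, sval Z i ^ p) ≤ cc → frobNorm Z ≤ R)
    (hanti : Antitone (lyapunov f lam p δ ε X)) :
    BddBelow (Set.range (lyapunov f lam p δ ε X)) := by
  obtain ⟨R, hR⟩ := hlevel (lyapunov f lam p δ ε X 0)
  obtain ⟨B, hB⟩ := bddBelow_image_frobNorm_le hgrad hlip hLf R
  refine ⟨B, ?_⟩
  rintro _ ⟨k, rfl⟩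
  have hobj := objective_le_lyapunov (f := f) (X := X) hp hlam hδ k (hε k)
  have hpen : 0 ≤ lam * ∑ i, sval (X k) i ^ p :=
    mul_nonneg hlam (Finset.sum_nonneg fun i _ => Real.rpow_nonneg (sval_nonneg _ i) p)
  linarith [hB ⟨X k, hR _ (hobj.trans (hanti (Nat.zero_le k))), rfl⟩]

theorem lyapunov_succ_add_le {f : Matrix (Fin m) (Fin n) ℝ → ℝ}
    {Gf : Matrix (Fin m) (Fin n) ℝ → Matrix (Fin m) (Fin n) ℝ} {Lf β lam p alphabar : ℝ}
    (hgrad : ∀ Z, HasFrobGradientAt f (Gf Z) Z)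
    (hlip : ∀ Z W, frobNorm (Gf Z - Gf W) ≤ Lf * frobNorm (Z - W)) (hLf : 0 ≤ Lf) (hβ : Lf ≤ β)
    (hp0 : 0 ≤ p) (hp1 : p ≤ 1) (hlam : 0 ≤ lam) {X Y : ℕ → Matrix (Fin m) (Fin n) ℝ}
    {ε : ℕ → Fin m → ℝ} (hε : ∀ k i, 0 < ε k i) (hεmono : ∀ k i, ε (k + 1) i ≤ ε k i)
    {α : ℕ → ℝ} (hα : ∀ k, α k ∈ Set.Icc 0 alphabar)
    (hY : ∀ k, Y k = X k + α k • (X k - X (k - 1)))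
    (hmin : ∀ k, surrogate f Gf β lam p (X k) (Y k) (ε k) (X (k + 1))
      ≤ surrogate f Gf β lam p (X k) (Y k) (ε k) (X k)) (k : ℕ) :
    lyapunov f lam p ((Lf + β) / 2 * alphabar ^ 2) ε X (k + 1)
        + (β / 2 - (Lf + β) / 2 * alphabar ^ 2) * frobNorm (X (k + 1) - X k) ^ 2
      ≤ lyapunov f lam p ((Lf + β) / 2 * alphabar ^ 2) ε X k := by
  have hstep := smoothedObjective_add_le_of_surrogate_le hgrad hlip hβ hp0 hp1 hlam (hε k)
    (fun i => (hε (k + 1) i).le) (hεmono k) (hmin k)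
  have hext : frobNorm (X k - Y k) ^ 2 ≤ alphabar ^ 2 * frobNorm (X k - X (k - 1)) ^ 2 := by
    rw [frobNorm_sub_comm, ← mul_pow]
    exact pow_le_pow_left₀ (frobNorm_nonneg _) (frobNorm_extrapolation_le hα hY k) 2
  have := mul_le_mul_of_nonneg_left hext (by linarith : 0 ≤ (Lf + β) / 2)
  simp only [lyapunov, Nat.add_sub_cancel]
  linarith

theorem tendsto_frobNorm_gaps {X Y : ℕ → Matrix (Fin m) (Fin n) ℝ} {α : ℕ → ℝ}
    {alphabar : ℝ} (hsum : Summable fun k => frobNorm (X (k + 1) - X k) ^ 2)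
    (hα : ∀ k, α k ∈ Set.Icc 0 alphabar) (hY : ∀ k, Y k = X k + α k • (X k - X (k - 1))) :
    Tendsto (fun k => frobNorm (X (k + 1) - X k)) atTop (𝓝 0) ∧
    Tendsto (fun k => frobNorm (Y k - X k)) atTop (𝓝 0) ∧
    Tendsto (fun k => frobNorm (Y k - X (k + 1))) atTop (𝓝 0) := by
  have hgap : Tendsto (fun k => frobNorm (X (k + 1) - X k)) atTop (𝓝 0) := by
    simpa [Real.sqrt_sq (frobNorm_nonneg _)] using hsum.tendsto_atTop_zero.sqrt
  have hprev : Tendsto (fun k => frobNorm (X k - X (k - 1))) atTop (𝓝 0) := by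
    refine (hgap.comp (tendsto_sub_atTop_nat 1)).congr' ?_
    filter_upwards [eventually_ge_atTop 1] with k hk
    simp [Nat.sub_add_cancel hk]
  have hYX : Tendsto (fun k => frobNorm (Y k - X k)) atTop (𝓝 0) :=
    squeeze_zero (fun k => frobNorm_nonneg _) (frobNorm_extrapolation_le hα hY)
      (by simpa using hprev.const_mul alphabar)
  refine ⟨hgap, hYX, squeeze_zero (fun k => frobNorm_nonneg _) (fun k => ?_)
    (by simpa using hYX.add hgap)⟩
  simp only [frobNorm_eq_norm, map_sub]
  simpa using norm_sub_le (frobEquiv (Y k) - frobEquiv (X k))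
    (frobEquiv (X (k + 1)) - frobEquiv (X k))

end Algorithm

theorem stmt_3_general {m n : ℕ} (p lam Lf β alphabar : ℝ)
    (hp0 : 0 < p) (hp1 : p < 1) (hlam : 0 < lam)
    (hLf : 0 ≤ Lf) (hβ : Lf < β)
    (hab0 : 0 < alphabar) (hab1 : alphabar < Real.sqrt (β / (3 * Lf + β)))
    (f : Matrix (Fin m) (Fin n) ℝ → ℝ)
    (Gf : Matrix (Fin m) (Fin n) ℝ → Matrix (Fin m) (Fin n) ℝ)
    (hgrad : ∀ Z, HasFrobGradientAt f (Gf Z) Z)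
    (hlip : ∀ Z W, frobNorm (Gf Z - Gf W) ≤ Lf * frobNorm (Z - W))
    (hlevel : ∀ cc : ℝ, ∃ R : ℝ, ∀ Z : Matrix (Fin m) (Fin n) ℝ,
      f Z + lam * (∑ i, sval Z i ^ p) ≤ cc → frobNorm Z ≤ R)
    (X Y : ℕ → Matrix (Fin m) (Fin n) ℝ) (ε : ℕ → Fin m → ℝ)
    (hε : ∀ k i, 0 < ε k i) (hεmono : ∀ k i, ε (k + 1) i ≤ ε k i)
    (α : ℕ → ℝ) (hα : ∀ k, α k ∈ Set.Icc 0 alphabar)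
    (hY : ∀ k, Y k = X k + α k • (X k - X (k - 1)))
    (hmin : ∀ k, ∀ Z : Matrix (Fin m) (Fin n) ℝ,
      f (Y k) + finner (X (k + 1)) (Gf (Y k))
          + β / 2 * frobNorm (X (k + 1) - Y k) ^ 2
          + β / 2 * frobNorm (X (k + 1) - X k) ^ 2
          + lam * ∑ i, (p * (sval (X k) i + ε k i) ^ (p - 1)) * sval (X (k + 1)) i
        ≤ f (Y k) + finner Z (Gf (Y k))
          + β / 2 * frobNorm (Z - Y k) ^ 2
          + β / 2 * frobNorm (Z - X k) ^ 2
          + lam * ∑ i, (p * (sval (X k) i + ε k i) ^ (p - 1)) * sval Z i) :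
    Summable (fun k : ℕ => frobNorm (X (k + 1) - X k) ^ 2) ∧
    Filter.Tendsto (fun k : ℕ => frobNorm (X (k + 1) - X k)) Filter.atTop (nhds 0) ∧
    Filter.Tendsto (fun k : ℕ => frobNorm (Y k - X k)) Filter.atTop (nhds 0) ∧
    Filter.Tendsto (fun k : ℕ => frobNorm (Y k - X (k + 1))) Filter.atTop (nhds 0) := by
  have hc : 0 < β / 2 - (Lf + β) / 2 * alphabar ^ 2 := by
    have hsq := (lt_div_iff₀ (by linarith : 0 < 3 * Lf + β)).1 ((Real.lt_sqrt hab0.le).1 hab1)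
    nlinarith [mul_nonneg hLf (sq_nonneg alphabar)]
  set δ := (Lf + β) / 2 * alphabar ^ 2
  set E := lyapunov f lam p δ ε X
  have hstep : ∀ k, E (k + 1) + (β / 2 - δ) * frobNorm (X (k + 1) - X k) ^ 2 ≤ E k :=
    lyapunov_succ_add_le hgrad hlip hLf hβ.le hp0.le hp1.le hlam.le hε hεmono hα hY
      fun k => hmin k (X k)
  have hanti : Antitone E := antitone_nat_of_succ_le fun k => by
    linarith [hstep k, mul_nonneg hc.le (sq_nonneg (frobNorm (X (k + 1) - X k)))]
  have hbdd : BddBelow (Set.range E) := bddBelow_range_lyapunov hgrad hlip hLf hp0.le hlam.le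
    (mul_nonneg (by linarith) (sq_nonneg _)) (fun k i => (hε k i).le) hlevel hanti
  have hsum := summable_of_add_mul_le hc (fun k => sq_nonneg _) hstep hbdd
  exact ⟨hsum, tendsto_frobNorm_gaps hsum hα hY⟩

/-- Square-summability of successive gaps: along the iterates of the
extrapolated iteratively reweighted nuclear norm algorithm,
`∑ₖ ‖X^{k+1} − X^k‖_F² < ∞`, hence `‖X^{k+1} − X^k‖_F → 0`, `‖Y^k − X^k‖_F → 0` and
`‖Y^k − X^{k+1}‖_F → 0`. (Here `X^{−1} = X^0`, realized by truncated subtraction.) -/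
theorem stmt_3 {m n : ℕ} (hmn : m ≤ n) (p lam Lf β alphabar : ℝ)
    (hp0 : 0 < p) (hp1 : p < 1) (hlam : 0 < lam)
    (hLf : 0 ≤ Lf) (hβ : Lf < β)
    (hab0 : 0 < alphabar) (hab1 : alphabar < Real.sqrt (β / (3 * Lf + β)))
    (f : Matrix (Fin m) (Fin n) ℝ → ℝ)
    (Gf : Matrix (Fin m) (Fin n) ℝ → Matrix (Fin m) (Fin n) ℝ)
    (hgrad : ∀ Z, HasFrobGradientAt f (Gf Z) Z)
    (hlip : ∀ Z W, frobNorm (Gf Z - Gf W) ≤ Lf * frobNorm (Z - W))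
    (hlevel : ∀ cc : ℝ, ∃ R : ℝ, ∀ Z : Matrix (Fin m) (Fin n) ℝ,
      f Z + lam * (∑ i, sval Z i ^ p) ≤ cc → frobNorm Z ≤ R)
    (X Y : ℕ → Matrix (Fin m) (Fin n) ℝ) (ε : ℕ → Fin m → ℝ)
    (hε : ∀ k i, 0 < ε k i) (hεmono : ∀ k i, ε (k + 1) i ≤ ε k i)
    (α : ℕ → ℝ) (hα : ∀ k, α k ∈ Set.Icc 0 alphabar)
    (hY : ∀ k, Y k = X k + α k • (X k - X (k - 1)))
    (hmin : ∀ k, ∀ Z : Matrix (Fin m) (Fin n) ℝ,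
      f (Y k) + finner (X (k + 1)) (Gf (Y k))
          + β / 2 * frobNorm (X (k + 1) - Y k) ^ 2
          + β / 2 * frobNorm (X (k + 1) - X k) ^ 2
          + lam * ∑ i, (p * (sval (X k) i + ε k i) ^ (p - 1)) * sval (X (k + 1)) i
        ≤ f (Y k) + finner Z (Gf (Y k))
          + β / 2 * frobNorm (Z - Y k) ^ 2
          + β / 2 * frobNorm (Z - X k) ^ 2
          + lam * ∑ i, (p * (sval (X k) i + ε k i) ^ (p - 1)) * sval Z i) :
    Summable (fun k : ℕ => frobNorm (X (k + 1) - X k) ^ 2) ∧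
    Filter.Tendsto (fun k : ℕ => frobNorm (X (k + 1) - X k)) Filter.atTop (nhds 0) ∧
    Filter.Tendsto (fun k : ℕ => frobNorm (Y k - X k)) Filter.atTop (nhds 0) ∧
    Filter.Tendsto (fun k : ℕ => frobNorm (Y k - X (k + 1))) Filter.atTop (nhds 0) :=
  stmt_3_general p lam Lf β alphabar hp0 hp1 hlam hLf hβ hab0 hab1 f Gf hgrad hlip hlevel X Y ε hε
    hεmono α hα hY hmin
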